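/- There exists ω ∈ (0, 1) such that for every z ∈ ℝⁿ with ‖z‖₁ ≤ r̄ one has ω · dist(z, S) ≤ dist(z, M), where dist denotes the Euclidean distance from a point to a set, S := {x ∈ M : ‖x‖₁ = r̄} is the (nonempty) solution set of the basis pursuit problem, and M = {x : Ax = b}. (This is an instance of Hoffman's error bound for the polyhedron B(r̄) and the affine set M, whose intersection is S.) -/

import Mathlib

open Filter Topology Metric Set

variable {E : Type*} [NormedAddCommGroup E] [NormedSpace ℝ E] [FiniteDimensional ℝ E]
variable {ι : Type*} [Fintype ι]

lemma sum_dite_subtype {F : Type*} [AddCommMonoid F] (p : ι → Prop) [DecidablePred p]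
    (f : Subtype p → F) :
    ∑ i : ι, (if h : p i then f ⟨i, h⟩ else 0) = ∑ j : Subtype p, f j := by
  classical
  calc ∑ i : ι, (if h : p i then f ⟨i, h⟩ else 0)
      = ∑ i ∈ Finset.univ.filter p, (if h : p i then f ⟨i, h⟩ else 0) :=
        (Finset.sum_subset (Finset.filter_subset p Finset.univ)
          (fun x _ hx => by
            simp only [Finset.mem_filter, Finset.mem_univ, true_and] at hx; simp [hx])).symm
    _ = ∑ j : Subtype p, (if h : p (j : ι) then f ⟨(j : ι), h⟩ else 0) :=
        Finset.sum_subtype _ (by simp) _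
    _ = ∑ j : Subtype p, f j := by
        apply Finset.sum_congr rfl
        intro j _
        rw [dif_pos j.2]

lemma sum_dite_mem {F : Type*} [AddCommMonoid F] (s : Finset ι) [DecidableEq ι] (f : ↥s → F) :
    ∑ i : ι, (if h : i ∈ s then f ⟨i, h⟩ else 0) = ∑ j : ↥s, f j := by
  calc ∑ i : ι, (if h : i ∈ s then f ⟨i, h⟩ else 0)
      = ∑ i ∈ s, (if h : i ∈ s then f ⟨i, h⟩ else 0) :=
        (Finset.sum_subset (s.subset_univ) (fun x _ hx => by simp [hx])).symm
    _ = ∑ j ∈ s.attach, (if h : (j : ι) ∈ s then f ⟨(j : ι), h⟩ else 0) :=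
        (Finset.sum_attach s _).symm
    _ = ∑ j : ↥s, f j := by
        rw [Finset.univ_eq_attach]
        apply Finset.sum_congr rfl
        intro j _
        rw [dif_pos j.2]

lemma indep_bound (a : ι → E) (s : Finset ι)
    (hs : LinearIndependent ℝ (fun i : s => a (i : ι))) :
    ∃ κ : ℝ, 0 < κ ∧ ∀ μ : ι → ℝ, (∀ i ∉ s, μ i = 0) →
      ∑ i, μ i ≤ κ * ‖∑ i, μ i • a i‖ := by
  classical
  set T : (↥s → ℝ) →ₗ[ℝ] E :=
    LinearMap.lsum ℝ (fun _ => ℝ) ℕ (fun i : s => LinearMap.id.smulRight (a (i : ι))) with hT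
  have hker : LinearMap.ker T = ⊥ := (Fintype.linearIndependent_iff'.mp hs)
  obtain ⟨K, hK0, hK⟩ := T.exists_antilipschitzWith hker
  refine ⟨(s.card : ℝ) * K + 1, by positivity, ?_⟩
  intro μ hμ
  have h1 : ∑ i : ι, μ i • a i = ∑ j : s, μ (j : ι) • a (j : ι) := by
    rw [← sum_dite_mem s (fun j : s => μ (j : ι) • a (j : ι))]
    apply Finset.sum_congr rfl
    intro i _
    by_cases h : i ∈ s
    · simp [h]
    · simp [h, hμ i h]
  have h2 : ∑ i : ι, μ i = ∑ j : s, μ (j : ι) := by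
    rw [← sum_dite_mem s (fun j : s => μ (j : ι))]
    apply Finset.sum_congr rfl
    intro i _
    by_cases h : i ∈ s
    · simp [h]
    · simp [h, hμ i h]
  set g : ↥s → ℝ := fun i => μ i with hg
  have hTg : T g = ∑ j : s, μ (j : ι) • a (j : ι) := by
    simp [hT, LinearMap.lsum_apply, hg]
  have hgnorm : ‖g‖ ≤ K * ‖T g‖ := by
    have := hK.le_mul_dist g 0
    simpa [dist_eq_norm] using this
  rw [h1, h2, ← hTg]
  calc ∑ j : s, μ (j : ι) = ∑ j : s, g j := rfl
    _ ≤ ∑ _j : s, ‖g‖ := by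
        apply Finset.sum_le_sum
        intro i _
        exact (le_abs_self _).trans (norm_le_pi_norm g i)
    _ = (s.card : ℝ) * ‖g‖ := by simp [Finset.card_univ, mul_comm]
    _ ≤ (s.card : ℝ) * (K * ‖T g‖) := by
        apply mul_le_mul_of_nonneg_left hgnorm (by positivity)
    _ ≤ ((s.card : ℝ) * K + 1) * ‖T g‖ := by
        rw [← mul_assoc]; nlinarith [norm_nonneg (T g)]

lemma carath_aux [DecidableEq ι] (a : ι → E) :
    ∀ N : ℕ, ∀ l : ι → ℝ, (Finset.univ.filter fun i => l i ≠ 0).card ≤ N → (∀ i, 0 ≤ l i) →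
      ∃ (μ : ι → ℝ) (s : Finset ι), (∀ i, 0 ≤ μ i) ∧ (∀ i, l i = 0 → μ i = 0) ∧
        (∀ i, i ∉ s → μ i = 0) ∧ (∑ i, μ i • a i = ∑ i, l i • a i) ∧
        LinearIndependent ℝ (fun i : s => a (i : ι)) := by
  intro N
  induction N with
  | zero =>
    intro l hcard hl
    refine ⟨l, ∅, hl, fun _ h => h, ?_, rfl, ?_⟩
    · intro i _
      by_contra h
      have : i ∈ Finset.univ.filter fun i => l i ≠ 0 := by simp [h]
      rw [Finset.card_eq_zero.mp (Nat.le_zero.mp hcard)] at this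
      exact absurd this (Finset.notMem_empty i)
    · haveI : IsEmpty ((∅ : Finset ι) : Type _) := by
        exact ⟨fun x => Finset.notMem_empty _ x.2⟩
      exact linearIndependent_empty_type
  | succ N ih =>
    intro l hcard hl
    set fs := Finset.univ.filter fun i => l i ≠ 0 with hfs
    by_cases hind : LinearIndependent ℝ (fun i : fs => a (i : ι))
    · refine ⟨l, fs, hl, fun _ h => h, ?_, rfl, hind⟩
      intro i hi
      by_contra h
      exact hi (by simp [hfs, h])
    · obtain ⟨g, hgsum, j₀, hj₀⟩ := Fintype.not_linearIndependent_iff.mp hind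
      set G : ι → ℝ := fun i => if h : i ∈ fs then g ⟨i, h⟩ else 0 with hG
      have hGsum : ∑ i, G i • a i = 0 := by
        rw [show ∑ i, G i • a i
            = ∑ i : ι, (if h : i ∈ fs then g ⟨i, h⟩ • a i else 0) from
          Finset.sum_congr rfl fun i _ => by by_cases h : i ∈ fs <;> simp [hG, h]]
        rw [show (fun i : ι => if h : i ∈ fs then g ⟨i, h⟩ • a i else 0)
            = fun i : ι => if h : i ∈ fs then ((fun j : fs => g j • a (j : ι)) ⟨i, h⟩) else 0
          from rfl]
        rw [sum_dite_mem fs (fun j : fs => g j • a (j : ι))]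
        exact hgsum
      have hGsupp : ∀ i, G i ≠ 0 → i ∈ fs := by
        intro i hi
        by_contra h
        simp [hG, h] at hi
      set c : ℝ := if 0 < G j₀ then 1 else -1 with hc
      set H : ι → ℝ := fun i => c * G i with hH
      have hHsum : ∑ i, H i • a i = 0 := by
        have : ∑ i, H i • a i = c • ∑ i, G i • a i := by
          rw [Finset.smul_sum]
          exact Finset.sum_congr rfl fun i _ => by rw [smul_smul]
        rw [this, hGsum, smul_zero]
      have hGj₀ : G (j₀ : ι) = g j₀ := by rw [hG]; simp [dif_pos j₀.2]
      have hHj₀ : 0 < H (j₀ : ι) := by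
        have hGne : G (j₀ : ι) ≠ 0 := by rw [hGj₀]; exact hj₀
        show 0 < c * G (j₀ : ι)
        rw [hc]
        by_cases h : 0 < G (j₀ : ι)
        · rw [if_pos h]; linarith
        · rw [if_neg h]
          have hlt : G (j₀ : ι) < 0 := lt_of_le_of_ne (not_lt.mp h) hGne
          nlinarith
      have hHsupp : ∀ i, H i ≠ 0 → i ∈ fs := by
        intro i hi
        apply hGsupp
        intro h
        rw [hH] at hi
        simp [h] at hi
      set Tset := fs.filter fun i => 0 < H i with hT
      have hTne : Tset.Nonempty := ⟨j₀, by
        simp only [hT, Finset.mem_filter]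
        exact ⟨j₀.2, hHj₀⟩⟩
      obtain ⟨i₀, hi₀T, hmin⟩ := Tset.exists_min_image (fun i => l i / H i) hTne
      have hi₀fs : (i₀ : ι) ∈ fs := (Finset.mem_filter.mp hi₀T).1
      have hHi₀ : 0 < H i₀ := (Finset.mem_filter.mp hi₀T).2
      set t : ℝ := l i₀ / H i₀ with ht
      have ht0 : 0 ≤ t := div_nonneg (hl i₀) hHi₀.le
      set l' : ι → ℝ := fun i => l i - t * H i with hl'
      have hl'0 : ∀ i, 0 ≤ l' i := by
        intro i
        show (0:ℝ) ≤ l i - t * H i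
        by_cases h : 0 < H i
        · have hiT : i ∈ Tset := Finset.mem_filter.mpr ⟨hHsupp i h.ne', h⟩
          have hle : t * H i ≤ l i := (le_div_iff₀ h).mp (hmin i hiT)
          linarith
        · have h1 : t * H i ≤ 0 := mul_nonpos_of_nonneg_of_nonpos ht0 (not_lt.mp h)
          have h2 := hl i
          linarith
      have hsupp' : ∀ i, l i = 0 → l' i = 0 := by
        intro i h
        have hifs : i ∉ fs := by simp [hfs, h]
        have hHi : H i = 0 := by
          by_contra hh
          exact hifs (hHsupp i hh)
        simp [hl', h, hHi]
      have hl'i₀ : l' i₀ = 0 := by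
        simp only [hl', ht]
        field_simp
        ring
      have hcard' : (Finset.univ.filter fun i => l' i ≠ 0).card ≤ N := by
        have hsub : (Finset.univ.filter fun i => l' i ≠ 0) ⊆ fs.erase i₀ := by
          intro i hi
          simp only [Finset.mem_filter, Finset.mem_univ, true_and] at hi
          apply Finset.mem_erase.mpr
          constructor
          · rintro rfl
            exact hi hl'i₀
          · by_contra h
            have : l i = 0 := by
              by_contra hh
              exact h (by simp [hfs, hh])
            exact hi (hsupp' i this)
        calc (Finset.univ.filter fun i => l' i ≠ 0).card ≤ (fs.erase i₀).card :=
              Finset.card_le_card hsub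
          _ = fs.card - 1 := Finset.card_erase_of_mem hi₀fs
          _ ≤ N := by omega
      have hsum' : ∑ i, l' i • a i = ∑ i, l i • a i := by
        have : ∑ i, l' i • a i = ∑ i, l i • a i - t • ∑ i, H i • a i := by
          rw [Finset.smul_sum, ← Finset.sum_sub_distrib]
          apply Finset.sum_congr rfl
          intro i _
          rw [hl', sub_smul, smul_smul]
        rw [this, hHsum, smul_zero, sub_zero]
      obtain ⟨μ, s, h1, h2, h3, h4, h5⟩ := ih l' hcard' hl'0
      exact ⟨μ, s, h1, fun i h => h2 i (hsupp' i h), h3, h4.trans hsum', h5⟩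

/-- The convex cone generated by a finite family. -/
def coneSet (a : ι → E) : Set E :=
  {w | ∃ l : ι → ℝ, (∀ i, 0 ≤ l i) ∧ w = ∑ i, l i • a i}

lemma coneSet_zero_mem (a : ι → E) : (0 : E) ∈ coneSet a :=
  ⟨0, fun _ => le_refl 0, by simp⟩

lemma coneSet_smul_mem (a : ι → E) {w : E} (hw : w ∈ coneSet a) {r : ℝ} (hr : 0 ≤ r) :
    r • w ∈ coneSet a := by
  obtain ⟨l, hl, rfl⟩ := hw
  exact ⟨fun i => r * l i, fun i => mul_nonneg hr (hl i), by
    rw [Finset.smul_sum]; exact Finset.sum_congr rfl fun i _ => (smul_smul r (l i) (a i))⟩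

lemma coneSet_convex (a : ι → E) : Convex ℝ (coneSet a) := by
  rintro x ⟨l1, hl1, rfl⟩ y ⟨l2, hl2, rfl⟩ p q hp hq hpq
  refine ⟨fun i => p * l1 i + q * l2 i,
    fun i => add_nonneg (mul_nonneg hp (hl1 i)) (mul_nonneg hq (hl2 i)), ?_⟩
  rw [Finset.smul_sum, Finset.smul_sum, ← Finset.sum_add_distrib]
  apply Finset.sum_congr rfl
  intro i _
  rw [add_smul, smul_smul, smul_smul]

lemma coneSet_closed (a : ι → E) : IsClosed (coneSet a) := by
  classical
  have hrep : coneSet a = ⋃ s : Finset ι,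
      (if LinearIndependent ℝ (fun i : s => a (i : ι)) then
        (fun g : (↥s → ℝ) => ∑ j : s, g j • a (j : ι)) '' {g | ∀ j, 0 ≤ g j} else ∅) := by
    apply Set.Subset.antisymm
    · rintro w ⟨l, hl, rfl⟩
      obtain ⟨μ, s, h1, _h2, h3, h4, h5⟩ :=
        carath_aux a (Finset.univ.filter fun i => l i ≠ 0).card l (le_refl _) hl
      apply Set.mem_iUnion.mpr
      refine ⟨s, ?_⟩
      rw [if_pos h5]
      refine ⟨fun j => μ (j : ι), fun j => h1 _, ?_⟩
      show (∑ j : s, μ (j : ι) • a (j : ι)) = ∑ i, l i • a i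
      rw [← h4]
      rw [← sum_dite_mem s (fun j : s => μ (j : ι) • a (j : ι))]
      apply Finset.sum_congr rfl
      intro i _
      by_cases h : i ∈ s
      · simp [h]
      · simp [h, h3 i h]
    · intro w hw
      obtain ⟨s, hs⟩ := Set.mem_iUnion.mp hw
      by_cases h : LinearIndependent ℝ (fun i : s => a (i : ι))
      · rw [if_pos h] at hs
        obtain ⟨g, hg, rfl⟩ := hs
        refine ⟨fun i => if h : i ∈ s then g ⟨i, h⟩ else 0,
          fun i => by by_cases hh : i ∈ s <;> simp [hh, hg _], ?_⟩
        rw [show (fun i : ι => (if h : i ∈ s then g ⟨i, h⟩ else 0) • a i)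
            = fun i : ι => (if h : i ∈ s then ((fun j : s => g j • a (j : ι)) ⟨i, h⟩) else 0) from
          funext fun i => by by_cases hh : i ∈ s <;> simp [hh]]
        rw [sum_dite_mem s (fun j : s => g j • a (j : ι))]
      · rw [if_neg h] at hs
        exact absurd hs (Set.notMem_empty w)
  rw [hrep]
  apply isClosed_iUnion_of_finite
  intro s
  by_cases h : LinearIndependent ℝ (fun i : s => a (i : ι))
  · rw [if_pos h]
    set T : (↥s → ℝ) →ₗ[ℝ] E :=
      LinearMap.lsum ℝ (fun _ => ℝ) ℕ (fun i : s => LinearMap.id.smulRight (a (i : ι))) with hT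
    have hker : LinearMap.ker T = ⊥ := (Fintype.linearIndependent_iff'.mp h)
    obtain ⟨K, hK0, hK⟩ := T.exists_antilipschitzWith hker
    have hTeq : (fun g : (↥s → ℝ) => ∑ j : s, g j • a (j : ι)) = fun g => T g := by
      funext g
      simp [hT, LinearMap.lsum_apply]
    rw [hTeq]
    have hclosed : IsClosed {g : ↥s → ℝ | ∀ j, 0 ≤ g j} := by
      have : {g : ↥s → ℝ | ∀ j, 0 ≤ g j} = ⋂ j, {g : ↥s → ℝ | 0 ≤ g j} := by
        ext g; simp [Set.mem_iInter]
      rw [this]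
      exact isClosed_iInter fun j => isClosed_le continuous_const (continuous_apply j)
    have hUC : UniformContinuous ⇑T := by
      have := T.toContinuousLinearMap.uniformContinuous
      rwa [LinearMap.coe_toContinuousLinearMap'] at this
    exact ((hK.isClosedEmbedding hUC).isClosedMap) _ hclosed
  · rw [if_neg h]
    exact isClosed_empty

section InnerP

variable {F : Type*} [NormedAddCommGroup F] [InnerProductSpace ℝ F] [FiniteDimensional ℝ F]

local notation "⟪" x ", " y "⟫" => (inner ℝ x y : ℝ)

lemma mem_coneSet_self [DecidableEq ι] (a : ι → F) (i : ι) : a i ∈ coneSet a := by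
  refine ⟨fun j => if j = i then 1 else 0, fun j => by positivity, ?_⟩
  simp [ite_smul]

lemma farkas (a : ι → F) {v : F} (hv : v ∉ coneSet a) :
    ∃ d : F, (∀ i, ⟪a i, d⟫ ≤ 0) ∧ 0 < ⟪v, d⟫ := by
  classical
  obtain ⟨f, u, hfu, huv⟩ :=
    geometric_hahn_banach_closed_point (coneSet_convex a) (coneSet_closed a) hv
  have hu0 : 0 < u := by
    have := hfu 0 (coneSet_zero_mem a)
    simpa using this
  have hfk : ∀ k ∈ coneSet a, f k ≤ 0 := by
    intro k hk
    by_contra h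
    push_neg at h
    have ht : 0 ≤ (u + 1) / f k := by positivity
    have := hfu (((u + 1) / f k) • k) (coneSet_smul_mem a hk ht)
    rw [map_smul] at this
    simp only [smul_eq_mul] at this
    rw [div_mul_cancel₀ _ (ne_of_gt h)] at this
    linarith
  set d : F := (InnerProductSpace.toDual ℝ F).symm f with hd
  have hdw : ∀ w : F, ⟪d, w⟫ = f w := fun w =>
    InnerProductSpace.toDual_symm_apply
  refine ⟨d, fun i => ?_, ?_⟩
  · rw [real_inner_comm, hdw]
    exact hfk (a i) (mem_coneSet_self a i)
  · rw [real_inner_comm, hdw]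
    linarith

lemma hoffman (a : ι → F) (c : ι → ℝ) (P : Set F)
    (hP : P = {x : F | ∀ i, ⟪a i, x⟫ ≤ c i}) (hne : P.Nonempty) :
    ∃ κ : ℝ, 0 < κ ∧ ∀ x, Metric.infDist x P ≤ κ * ∑ i, max (⟪a i, x⟫ - c i) 0 := by
  classical
  rcases isEmpty_or_nonempty ι with hι | hι
  · refine ⟨1, one_pos, fun x => ?_⟩
    have hxP : x ∈ P := by rw [hP]; intro i; exact (hι.false i).elim
    simp [Metric.infDist_zero_of_mem hxP]
  have hch : ∀ s : Finset ι, ∃ k : ℝ, 0 < k ∧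
      (LinearIndependent ℝ (fun i : s => a (i : ι)) → ∀ μ : ι → ℝ, (∀ i ∉ s, μ i = 0) →
        ∑ i, μ i ≤ k * ‖∑ i, μ i • a i‖) := by
    intro s
    by_cases h : LinearIndependent ℝ (fun i : s => a (i : ι))
    · obtain ⟨k, hk0, hk⟩ := indep_bound a s h
      exact ⟨k, hk0, fun _ => hk⟩
    · exact ⟨1, one_pos, fun h' => absurd h' h⟩
  choose k hk0 hkb using hch
  set κ : ℝ := ∑ s : Finset ι, k s with hκ
  have hκ0 : 0 < κ := Finset.sum_pos (fun s _ => hk0 s) ⟨∅, Finset.mem_univ _⟩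
  have hκs : ∀ s : Finset ι, k s ≤ κ :=
    fun s => Finset.single_le_sum (fun s _ => (hk0 s).le) (Finset.mem_univ s)
  refine ⟨κ, hκ0, fun x => ?_⟩
  have hPconv : Convex ℝ P := by
    rw [hP]
    have : {x : F | ∀ i, ⟪a i, x⟫ ≤ c i} = ⋂ i, {x : F | ⟪a i, x⟫ ≤ c i} := by
      ext y; simp [Set.mem_iInter]
    rw [this]
    exact convex_iInter fun i => convex_halfSpace_le
      ⟨fun u v => inner_add_right _ _ _, fun r u => real_inner_smul_right _ _ _⟩ (c i)
  have hPclosed : IsClosed P := by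
    rw [hP]
    have : {x : F | ∀ i, ⟪a i, x⟫ ≤ c i} = ⋂ i, {x : F | ⟪a i, x⟫ ≤ c i} := by
      ext y; simp [Set.mem_iInter]
    rw [this]
    exact isClosed_iInter fun i =>
      isClosed_le (innerSL ℝ (a i)).continuous continuous_const
  obtain ⟨y, hyP, hy⟩ :=
    exists_norm_eq_iInf_of_complete_convex hne hPclosed.isComplete hPconv x
  have hvar : ∀ w ∈ P, ⟪x - y, w - y⟫ ≤ 0 :=
    (norm_eq_iInf_iff_real_inner_le_zero hPconv hyP).mp hy
  have hyPle : ∀ i, ⟪a i, y⟫ ≤ c i := by rw [hP] at hyP; exact hyP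
  set v : F := x - y with hv
  have hvK : v ∈ coneSet (fun j : Subtype (fun i => ⟪a i, y⟫ = c i) => a (j : ι)) := by
    by_contra hvn
    obtain ⟨d, hd1, hd2⟩ := farkas _ hvn
    have htfpos : ∀ i, ⟪a i, y⟫ ≠ c i → 0 < (c i - ⟪a i, y⟫) / (|⟪a i, d⟫| + 1) := by
      intro i h
      have hlt : ⟪a i, y⟫ < c i := lt_of_le_of_ne (hyPle i) h
      have hsub : 0 < c i - ⟪a i, y⟫ := by linarith
      positivity
    set tf : ι → ℝ := fun i =>
      if h : ⟪a i, y⟫ = c i then 1 else (c i - ⟪a i, y⟫) / (|⟪a i, d⟫| + 1) with htf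
    have htfpos' : ∀ i, 0 < tf i := by
      intro i
      by_cases h : ⟪a i, y⟫ = c i
      · simp [htf, h]
      · simpa only [htf, dif_neg h] using htfpos i h
    set t : ℝ := Finset.univ.inf' (Finset.univ_nonempty) tf with htdef
    have ht0 : 0 < t := by
      rw [htdef, Finset.lt_inf'_iff]
      exact fun i _ => htfpos' i
    have htle : ∀ i, t ≤ tf i := fun i => Finset.inf'_le _ (Finset.mem_univ i)
    have hwP : y + t • d ∈ P := by
      rw [hP]
      intro i
      rw [inner_add_right, real_inner_smul_right]
      by_cases h : ⟪a i, y⟫ = c i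
      · have hd0 : ⟪a i, d⟫ ≤ 0 := hd1 ⟨i, h⟩
        nlinarith
      · have h1 : t ≤ (c i - ⟪a i, y⟫) / (|⟪a i, d⟫| + 1) := by
          simpa only [htf, dif_neg h] using htle i
        have h2 : (0:ℝ) < |⟪a i, d⟫| + 1 := by positivity
        have h3 : t * (|⟪a i, d⟫| + 1) ≤ c i - ⟪a i, y⟫ := (le_div_iff₀ h2).mp h1
        have h4 : t * ⟪a i, d⟫ ≤ t * (|⟪a i, d⟫| + 1) := by
          have : ⟪a i, d⟫ ≤ |⟪a i, d⟫| + 1 := (le_abs_self _).trans (by linarith)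
          exact mul_le_mul_of_nonneg_left this ht0.le
        linarith
    have hcontra := hvar _ hwP
    rw [add_sub_cancel_left, real_inner_smul_right] at hcontra
    nlinarith
  obtain ⟨lam, hlam0, hlamsum⟩ := hvK
  set lam' : ι → ℝ := fun i => if h : ⟪a i, y⟫ = c i then lam ⟨i, h⟩ else 0 with hlam'
  have hlam'0 : ∀ i, 0 ≤ lam' i := by
    intro i
    by_cases h : ⟪a i, y⟫ = c i <;> simp [hlam', h, hlam0 _]
  have hlam'sum : ∑ i, lam' i • a i = v := by
    rw [show (fun i : ι => lam' i • a i)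
        = fun i : ι => (if h : ⟪a i, y⟫ = c i then
            ((fun j : Subtype (fun i => ⟪a i, y⟫ = c i) => lam j • a (j : ι)) ⟨i, h⟩) else 0)
      from funext fun i => by by_cases hh : ⟪a i, y⟫ = c i <;> simp [hlam', hh]]
    rw [sum_dite_subtype _ (fun j : Subtype (fun i => ⟪a i, y⟫ = c i) => lam j • a (j : ι))]
    exact hlamsum.symm
  obtain ⟨μ, s, hμ0, hμsupp, hμs, hμsum, hμind⟩ :=
    carath_aux a (Finset.univ.filter fun i => lam' i ≠ 0).card lam' (le_refl _) hlam'0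
  have hμsumv : ∑ i, μ i • a i = v := by rw [hμsum, hlam'sum]
  have hμactive : ∀ i, μ i ≠ 0 → ⟪a i, y⟫ = c i := by
    intro i h
    by_contra hc2
    have : lam' i = 0 := by simp [hlam', hc2]
    exact h (hμsupp i this)
  have hsumμ : ∑ i, μ i ≤ κ * ‖v‖ := by
    have := hkb s hμind μ hμs
    rw [hμsumv] at this
    calc ∑ i, μ i ≤ k s * ‖v‖ := this
      _ ≤ κ * ‖v‖ := mul_le_mul_of_nonneg_right (hκs s) (norm_nonneg v)
  set V : ℝ := ∑ i, max (⟪a i, x⟫ - c i) 0 with hV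
  have hV0 : 0 ≤ V := Finset.sum_nonneg fun i _ => le_max_right _ _
  have hVi : ∀ i, max (⟪a i, x⟫ - c i) 0 ≤ V := by
    intro i
    rw [hV]
    exact Finset.single_le_sum (f := fun i => max (⟪a i, x⟫ - c i) 0)
      (fun j _ => le_max_right _ _) (Finset.mem_univ i)
  have hnormsq : ‖v‖ ^ 2 ≤ (∑ i, μ i) * V := by
    have h1 : ‖v‖ ^ 2 = ⟪v, v⟫ := (real_inner_self_eq_norm_sq v).symm
    have h2 : ⟪v, v⟫ = ∑ i, μ i * ⟪a i, v⟫ := by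
      nth_rewrite 1 [← hμsumv]
      rw [sum_inner]
      exact Finset.sum_congr rfl fun i _ => real_inner_smul_left _ _ _
    rw [h1, h2]
    have h3 : ∀ i, μ i * ⟪a i, v⟫ ≤ μ i * V := by
      intro i
      by_cases h : μ i = 0
      · simp [h]
      · have hact := hμactive i h
        have : ⟪a i, v⟫ = ⟪a i, x⟫ - c i := by
          rw [hv, inner_sub_right, hact]
        rw [this]
        apply mul_le_mul_of_nonneg_left _ (hμ0 i)
        exact (le_max_left _ _).trans (hVi i)
    calc ∑ i, μ i * ⟪a i, v⟫ ≤ ∑ i, μ i * V := Finset.sum_le_sum fun i _ => h3 i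
      _ = (∑ i, μ i) * V := (Finset.sum_mul _ _ _).symm
  have hdist : Metric.infDist x P ≤ ‖v‖ := by
    rw [hv]
    have h := Metric.infDist_le_dist_of_mem (x := x) hyP
    rwa [dist_eq_norm] at h
  by_cases hv0 : ‖v‖ = 0
  · rw [hv0] at hdist
    exact hdist.trans (by positivity)
  · have hvpos : 0 < ‖v‖ := lt_of_le_of_ne (norm_nonneg v) (Ne.symm hv0)
    have hsq : ‖v‖ ^ 2 ≤ κ * ‖v‖ * V := by
      calc ‖v‖ ^ 2 ≤ (∑ i, μ i) * V := hnormsq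
        _ ≤ κ * ‖v‖ * V := mul_le_mul_of_nonneg_right hsumμ hV0
    have hfin : ‖v‖ ≤ κ * V := by nlinarith
    exact hdist.trans hfin

end InnerP

open Filter Topology

/-- The ℓ¹-norm on ℝⁿ. -/
noncomputable def norm1 {n : ℕ} (x : EuclideanSpace ℝ (Fin n)) : ℝ := ∑ i, |x i|

section App

variable {n : ℕ}

local notation "⟪" x ", " y "⟫" => (inner ℝ x y : ℝ)

lemma euclid_inner_eq (u x : EuclideanSpace ℝ (Fin n)) : ⟪u, x⟫ = ∑ j, u j * x j := by
  rw [PiLp.inner_apply]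
  exact Finset.sum_congr rfl fun j _ => by
    simp [RCLike.inner_apply, conj_trivial, mul_comm]

lemma norm1_continuous : Continuous (norm1 (n := n)) := by
  apply continuous_finset_sum
  intro i _
  exact ((EuclideanSpace.proj (𝕜 := ℝ) i).continuous).abs

lemma norm1_nonneg (x : EuclideanSpace ℝ (Fin n)) : 0 ≤ norm1 x :=
  Finset.sum_nonneg fun i _ => abs_nonneg _

lemma norm_le_norm1 (x : EuclideanSpace ℝ (Fin n)) : ‖x‖ ≤ norm1 x := by
  rw [EuclideanSpace.norm_eq]
  have h1 : ∑ i, ‖x i‖ ^ 2 ≤ (∑ i, |x i|) ^ 2 := by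
    calc ∑ i, ‖x i‖ ^ 2 = ∑ i, |x i| ^ 2 := by
          exact Finset.sum_congr rfl fun i _ => by rw [Real.norm_eq_abs]
      _ ≤ (∑ i, |x i|) ^ 2 :=
          Finset.sum_sq_le_sq_sum_of_nonneg fun i _ => abs_nonneg _
  calc √(∑ i, ‖x i‖ ^ 2) ≤ √((∑ i, |x i|) ^ 2) := Real.sqrt_le_sqrt h1
    _ = ∑ i, |x i| := Real.sqrt_sq (Finset.sum_nonneg fun i _ => abs_nonneg _)
    _ = norm1 x := rfl

/-- sign vectors -/
noncomputable def sgnVec (ε : Fin n → Bool) : EuclideanSpace ℝ (Fin n) :=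
  WithLp.toLp 2 fun j => if ε j then 1 else -1

lemma sgnVec_inner_le (ε : Fin n → Bool) (x : EuclideanSpace ℝ (Fin n)) :
    ⟪sgnVec ε, x⟫ ≤ norm1 x := by
  rw [euclid_inner_eq]
  apply Finset.sum_le_sum
  intro j _
  show (if ε j then (1:ℝ) else -1) * x j ≤ |x j|
  by_cases h : ε j
  · simp [h, le_abs_self]
  · rw [if_neg h]; nlinarith [neg_abs_le (x j), le_abs_self (x j)]

lemma sgnVec_inner_eq (x : EuclideanSpace ℝ (Fin n)) :
    ∃ ε : Fin n → Bool, ⟪sgnVec ε, x⟫ = norm1 x := by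
  refine ⟨fun j => decide (0 ≤ x j), ?_⟩
  rw [euclid_inner_eq]
  apply Finset.sum_congr rfl
  intro j _
  show (if decide (0 ≤ x j) = true then (1:ℝ) else -1) * x j = |x j|
  by_cases h : 0 ≤ x j
  · simp [h, abs_of_nonneg h]
  · push_neg at h
    simp [not_le.mpr h, abs_of_neg h]

end App

set_option maxHeartbeats 1000000

section Main

local notation "⟪" x ", " y "⟫" => (inner ℝ x y : ℝ)

private lemma max_add_max_neg (t : ℝ) : max t 0 + max (-t) 0 = |t| := by
  rcases le_total 0 t with h | h
  · rw [max_eq_left h, max_eq_right (neg_nonpos.mpr h), add_zero, abs_of_nonneg h]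
  · rw [max_eq_right h, max_eq_left (neg_nonneg.mpr h), zero_add, abs_of_nonpos h]

/-- Hoffman-type error bound: there is ω ∈ (0,1) with
ω · dist(z, S) ≤ dist(z, M) for all z in the optimal ℓ¹-ball B(r̄), where
S = {x ∈ M : ‖x‖₁ = r̄} is the solution set of (BP). -/
theorem bpmap_error_bound {n m : ℕ} (hn : 1 ≤ n)
    (A : Matrix (Fin m) (Fin n) ℝ) (b : Fin m → ℝ)
    (M : Set (EuclideanSpace ℝ (Fin n)))
    (hM : M = {x | A.mulVec (WithLp.ofLp x) = b})
    (hMne : M.Nonempty)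
    (rbar : ℝ) (hrbar : rbar = sInf (norm1 '' M))
    (S : Set (EuclideanSpace ℝ (Fin n)))
    (hS : S = {u ∈ M | norm1 u = rbar}) :
    ∃ ω : ℝ, 0 < ω ∧ ω < 1 ∧
      ∀ z : EuclideanSpace ℝ (Fin n), norm1 z ≤ rbar →
        ω * Metric.infDist z S ≤ Metric.infDist z M := by
  classical
  set row : Fin m → EuclideanSpace ℝ (Fin n) :=
    fun i => (WithLp.toLp 2 (fun j => A i j) : EuclideanSpace ℝ (Fin n)) with hrow
  have hinner_row : ∀ (i : Fin m) (x : EuclideanSpace ℝ (Fin n)), ⟪row i, x⟫ = A.mulVec (WithLp.ofLp x) i := by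
    intro i x
    rw [euclid_inner_eq]
    simp [Matrix.mulVec, dotProduct, hrow]
  have hMmem : ∀ x : EuclideanSpace ℝ (Fin n), x ∈ M ↔ ∀ i, ⟪row i, x⟫ = b i := by
    intro x
    rw [hM]
    simp only [Set.mem_setOf_eq, funext_iff]
    exact forall_congr' fun i => by rw [hinner_row]
  -- M is closed
  have hMclosed : IsClosed M := by
    have : M = ⋂ i, {x : EuclideanSpace ℝ (Fin n) | ⟪row i, x⟫ = b i} := by
      ext x; rw [hMmem]; simp [Set.mem_iInter]
    rw [this]
    exact isClosed_iInter fun i =>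
      isClosed_eq (innerSL ℝ (row i)).continuous continuous_const
  -- basics on rbar
  have hbdd : BddBelow (norm1 '' M) := ⟨0, by rintro y ⟨x, _, rfl⟩; exact norm1_nonneg x⟩
  have hrle : ∀ x ∈ M, rbar ≤ norm1 x := by
    intro x hx
    rw [hrbar]
    exact csInf_le hbdd ⟨x, hx, rfl⟩
  -- existence of a minimizer
  obtain ⟨x₀, hx₀⟩ := id hMne
  have hKcompact : IsCompact (M ∩ {x : EuclideanSpace ℝ (Fin n) | norm1 x ≤ norm1 x₀}) := by
    apply Metric.isCompact_of_isClosed_isBounded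
    · exact hMclosed.inter (isClosed_le norm1_continuous continuous_const)
    · apply Bornology.IsBounded.subset (Metric.isBounded_closedBall (x := (0: EuclideanSpace ℝ (Fin n))) (r := norm1 x₀))
      rintro x ⟨_, hx2⟩
      simp only [Metric.mem_closedBall, dist_zero_right]
      exact (norm_le_norm1 x).trans hx2
  obtain ⟨xs, hxsK, hxsmin⟩ := hKcompact.exists_isMinOn ⟨x₀, hx₀, Set.mem_setOf.mpr (le_refl _)⟩
    norm1_continuous.continuousOn
  have hxsM : xs ∈ M := hxsK.1
  have hxsr : norm1 xs = rbar := by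
    apply le_antisymm _ (hrle xs hxsM)
    rw [hrbar]
    apply le_csInf (Set.Nonempty.image norm1 ⟨x₀, hx₀⟩)
    rintro y ⟨x, hxM, rfl⟩
    by_cases h : norm1 x ≤ norm1 x₀
    · exact hxsmin ⟨hxM, h⟩
    · exact (hxsmin ⟨hx₀, Set.mem_setOf.mpr (le_refl _)⟩).trans (le_of_not_ge h)
  have hSne : S.Nonempty := ⟨xs, by rw [hS]; exact ⟨hxsM, hxsr⟩⟩
  -- set up the constraint system
  set aa : (Fin m ⊕ Fin m) ⊕ (Fin n → Bool) → EuclideanSpace ℝ (Fin n) := Sum.elim (Sum.elim row (fun i => -row i)) sgnVec with haa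
  set cc : (Fin m ⊕ Fin m) ⊕ (Fin n → Bool) → ℝ := Sum.elim (Sum.elim b (fun i => -(b i))) (fun _ => rbar) with hcc
  have hSP : S = {x : EuclideanSpace ℝ (Fin n) | ∀ i, ⟪aa i, x⟫ ≤ cc i} := by
    ext x
    rw [hS]
    simp only [Set.mem_setOf_eq, Set.mem_sep_iff]
    constructor
    · rintro ⟨hxM, hxr⟩
      rintro ((i | i) | ε)
      · rw [haa, hcc]
        simp only [Sum.elim_inl]
        exact le_of_eq ((hMmem x).mp hxM _)
      · rw [haa, hcc]
        simp only [Sum.elim_inl, Sum.elim_inr]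
        rw [inner_neg_left]
        exact le_of_eq (by rw [(hMmem x).mp hxM _])
      · rw [haa, hcc]
        simp only [Sum.elim_inr]
        exact (sgnVec_inner_le ε x).trans (le_of_eq hxr)
    · intro hx
      have hxM : x ∈ M := by
        rw [hMmem]
        intro i
        have h1 := hx (Sum.inl (Sum.inl i))
        have h2 := hx (Sum.inl (Sum.inr i))
        rw [haa, hcc] at h1 h2
        simp only [Sum.elim_inl, Sum.elim_inr] at h1 h2
        rw [inner_neg_left] at h2
        linarith
      refine ⟨hxM, ?_⟩
      obtain ⟨ε, hε⟩ := sgnVec_inner_eq x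
      have h3 := hx (Sum.inr ε)
      rw [haa, hcc] at h3
      simp only [Sum.elim_inr] at h3
      rw [hε] at h3
      exact le_antisymm h3 (hrle x hxM)
  obtain ⟨κ, hκ0, hκ⟩ := hoffman aa cc S hSP hSne
  set L : ℝ := ∑ i, ‖row i‖ with hL
  have hL0 : 0 ≤ L := Finset.sum_nonneg fun i _ => norm_nonneg _
  have hκL : 0 ≤ κ * L := mul_nonneg hκ0.le hL0
  have h2L : (0:ℝ) < 2 + κ * L := by linarith
  refine ⟨(2 + κ * L)⁻¹, inv_pos.mpr h2L, ?_, ?_⟩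
  · rw [inv_lt_one_iff₀]
    right
    linarith
  intro z hz
  -- compute the violation sum
  have hVsplit : ∑ i, max (⟪aa i, z⟫ - cc i) 0 = ∑ i, |⟪row i, z⟫ - b i| := by
    rw [Fintype.sum_sum_type]
    have hsgn : ∀ ε : Fin n → Bool, max (⟪aa (Sum.inr ε), z⟫ - cc (Sum.inr ε)) 0 = 0 := by
      intro ε
      apply max_eq_right
      rw [haa, hcc]
      simp only [Sum.elim_inr]
      have := (sgnVec_inner_le ε z).trans hz
      linarith
    rw [Finset.sum_congr rfl fun ε _ => hsgn ε, Finset.sum_const, smul_zero, add_zero]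
    rw [Fintype.sum_sum_type]
    rw [← Finset.sum_add_distrib]
    apply Finset.sum_congr rfl
    intro i _
    rw [haa, hcc]
    simp only [Sum.elim_inl, Sum.elim_inr]
    rw [inner_neg_left]
    rw [show -⟪row i, z⟫ - -(b i) = -(⟪row i, z⟫ - b i) by ring]
    exact max_add_max_neg _
  -- bound the violation by the distance to M
  obtain ⟨p, hpM, hpd⟩ := hMclosed.exists_infDist_eq_dist hMne z
  have hVle : ∑ i, |⟪row i, z⟫ - b i| ≤ L * Metric.infDist z M := by
    rw [hpd, dist_eq_norm, hL, Finset.sum_mul]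
    apply Finset.sum_le_sum
    intro i _
    have h1 : ⟪row i, p⟫ = b i := (hMmem p).mp hpM i
    have h2 : ⟪row i, z⟫ - b i = ⟪row i, z - p⟫ := by
      rw [inner_sub_right, h1]
    rw [h2]
    exact abs_real_inner_le_norm _ _
  have hmain : Metric.infDist z S ≤ κ * L * Metric.infDist z M := by
    calc Metric.infDist z S ≤ κ * ∑ i, max (⟪aa i, z⟫ - cc i) 0 := hκ z
      _ = κ * ∑ i, |⟪row i, z⟫ - b i| := by rw [hVsplit]
      _ ≤ κ * (L * Metric.infDist z M) := mul_le_mul_of_nonneg_left hVle hκ0.le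
      _ = κ * L * Metric.infDist z M := by ring
  have hω1 : (2 + κ * L)⁻¹ * (κ * L) ≤ 1 := by
    rw [← div_eq_inv_mul]
    exact div_le_one_of_le₀ (by linarith) h2L.le
  calc (2 + κ * L)⁻¹ * Metric.infDist z S
      ≤ (2 + κ * L)⁻¹ * (κ * L * Metric.infDist z M) := by
        apply mul_le_mul_of_nonneg_left hmain (inv_nonneg.mpr h2L.le)
    _ = ((2 + κ * L)⁻¹ * (κ * L)) * Metric.infDist z M := by ring
    _ ≤ 1 * Metric.infDist z M :=
        mul_le_mul_of_nonneg_right hω1 Metric.infDist_nonneg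
    _ = Metric.infDist z M := one_mul _

end Main
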